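/- Let n ≥ 2, let H ≤ Sym(n), and let T and T' be tables over H that induce the same homeomorphism of C_n. Then T and T' are related by a finite sequence of the following moves and their inverses: (expansion) replace a column (p_i; σ_i; q_i; τ_i) by the n columns (p_i‖σ_i(a); σ_i; q_i‖τ_i(a); τ_i) for a ∈ A_n; (push-down) replace all columns (p_i; σ_i; q_i; τ_i) simultaneously by (p_i; id; q_i; τ_iσ_i^{−1}); (push-up) replace all columns (p_i; σ_i; q_i; τ_i) simultaneously by (p_i; σ_iτ_i^{−1}; q_i; id). -/

import Mathlib

namespace Paper

/-- Concatenation of a finite word with an infinite word. -/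
def cat {n : ℕ} (w : List (Fin n)) (ζ : ℕ → Fin n) : ℕ → Fin n :=
  fun i => if h : i < w.length then w[i]'h else ζ (i - w.length)

/-- The finite word `w` is a prefix of the infinite word `ζ`. -/
def IsPref {n : ℕ} (w : List (Fin n)) (ζ : ℕ → Fin n) : Prop :=
  ∀ (i : ℕ) (h : i < w.length), w[i]'h = ζ i

/-- An indexed family of finite words is a complete prefix code: every infinite
word has exactly one member of the family as a prefix. -/
def IsCPC {n : ℕ} {ι : Type} (P : ι → List (Fin n)) : Prop :=
  ∀ ζ : ℕ → Fin n, ∃! i : ι, IsPref (P i) ζ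

/-- `f` is the map described by the table with domain code `P`, range code `Q` and
permutations `σ, τ`: it sends `pᵢ‖σᵢ(u)` to `qᵢ‖τᵢ(u)`. -/
def TableFun {n : ℕ} {ι : Type} (P Q : ι → List (Fin n))
    (σ τ : ι → Equiv.Perm (Fin n)) (f : (ℕ → Fin n) → (ℕ → Fin n)) : Prop :=
  ∀ (i : ι) (u : ℕ → Fin n),
    f (cat (P i) (fun j => σ i (u j))) = cat (Q i) (fun j => τ i (u j))

/-- A table over a subgroup `H ≤ Sym(n)`. -/
structure Table (n : ℕ) (H : Subgroup (Equiv.Perm (Fin n))) where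
  k : ℕ
  P : Fin k → List (Fin n)
  Q : Fin k → List (Fin n)
  σ : Fin k → Equiv.Perm (Fin n)
  τ : Fin k → Equiv.Perm (Fin n)
  σ_mem : ∀ i, σ i ∈ H
  τ_mem : ∀ i, τ i ∈ H
  hP : IsCPC P
  hQ : IsCPC Q

/-- The table `T` induces the map `f`. -/
def Induces {n : ℕ} {H : Subgroup (Equiv.Perm (Fin n))} (T : Table n H)
    (f : (ℕ → Fin n) → (ℕ → Fin n)) : Prop :=
  TableFun T.P T.Q T.σ T.τ f

/-- The symmetric Thompson group `V_n(H)`, as the set of homeomorphisms of the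
Cantor space `C_n = A_n^ℕ` induced by tables over `H`. -/
def Vset (n : ℕ) (H : Subgroup (Equiv.Perm (Fin n))) :
    Set ((ℕ → Fin n) ≃ₜ (ℕ → Fin n)) :=
  { f | ∃ T : Table n H, Induces T ⇑f }

/-- `T'` is obtained from `T` by expanding the `i`-th column: that column is
deleted and, for each letter `a ∈ A_n`, the column `(pᵢ‖σᵢ(a); σᵢ; qᵢ‖τᵢ(a); τᵢ)`
is inserted (tables being identified with their sets of columns, the bijection `e`
matches the columns of `T'` with those of the expanded table). -/
def ExpandAt {n : ℕ} {H : Subgroup (Equiv.Perm (Fin n))} (T : Table n H)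
    (i : Fin T.k) (T' : Table n H) : Prop :=
  ∃ e : Fin T'.k ≃ ({j : Fin T.k // j ≠ i} ⊕ Fin n),
    ∀ j : Fin T'.k,
      (∀ j' : {j : Fin T.k // j ≠ i}, e j = Sum.inl j' →
        T'.P j = T.P j'.1 ∧ T'.σ j = T.σ j'.1 ∧
        T'.Q j = T.Q j'.1 ∧ T'.τ j = T.τ j'.1) ∧
      (∀ a : Fin n, e j = Sum.inr a →
        T'.P j = T.P i ++ [T.σ i a] ∧ T'.σ j = T.σ i ∧
        T'.Q j = T.Q i ++ [T.τ i a] ∧ T'.τ j = T.τ i)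

/-- `T'` is obtained from `T` by pushing all permutations down: every column
`(pᵢ; σᵢ; qᵢ; τᵢ)` is replaced by `(pᵢ; id; qᵢ; τᵢσᵢ⁻¹)`. -/
def PushDown {n : ℕ} {H : Subgroup (Equiv.Perm (Fin n))} (T T' : Table n H) : Prop :=
  ∃ h : T'.k = T.k, ∀ j : Fin T'.k,
    T'.P j = T.P (Fin.cast h j) ∧ T'.σ j = 1 ∧
    T'.Q j = T.Q (Fin.cast h j) ∧
    T'.τ j = T.τ (Fin.cast h j) * (T.σ (Fin.cast h j))⁻¹

/-- `T'` is obtained from `T` by pushing all permutations up: every column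
`(pᵢ; σᵢ; qᵢ; τᵢ)` is replaced by `(pᵢ; σᵢτᵢ⁻¹; qᵢ; id)`. -/
def PushUp {n : ℕ} {H : Subgroup (Equiv.Perm (Fin n))} (T T' : Table n H) : Prop :=
  ∃ h : T'.k = T.k, ∀ j : Fin T'.k,
    T'.P j = T.P (Fin.cast h j) ∧
    T'.σ j = T.σ (Fin.cast h j) * (T.τ (Fin.cast h j))⁻¹ ∧
    T'.Q j = T.Q (Fin.cast h j) ∧ T'.τ j = 1

/-- A basic move on tables: an expansion, a push-down, or a push-up. -/
def Move {n : ℕ} {H : Subgroup (Equiv.Perm (Fin n))} (T T' : Table n H) : Prop :=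
  (∃ i : Fin T.k, ExpandAt T i T') ∨ PushDown T T' ∨ PushUp T T'

/-!
Expanding columns, every table can be brought to uniform depth `N`, and a push-down then makes
its domain permutations trivial. A complete prefix code of words of one length `N` lists every
word of length `N` exactly once, so two such tables for the same map have the same domain words.
Since `n ≥ 2`, the word `q` and permutation `τ` are determined by the map `u ↦ q‖τ(u)`, so the
two tables have the same columns in a different order; expanding both at a common column yields
one and the same table.
-/

open Finset Relation

section Words

variable {n : ℕ}

theorem cat_apply_of_lt {w : List (Fin n)} {i : ℕ} (h : i < w.length) (ζ : ℕ → Fin n) :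
    cat w ζ i = w[i] :=
  dif_pos h

theorem cat_apply_length (w : List (Fin n)) (ζ : ℕ → Fin n) : cat w ζ w.length = ζ 0 := by
  simp [cat]

theorem cat_append (w v : List (Fin n)) (ζ : ℕ → Fin n) :
    cat (w ++ v) ζ = cat w (cat v ζ) := by
  funext i
  simp only [cat, List.length_append]
  split_ifs with h1 h2 h2 <;> try omega
  · exact List.getElem_append_left h2
  · exact List.getElem_append_right (by omega)
  · congr 1; omega

theorem comp_cat (g : Fin n → Fin n) (w : List (Fin n)) (ζ : ℕ → Fin n) :
    (fun i => g (cat w ζ i)) = cat (w.map g) (fun i => g (ζ i)) := by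
  funext i
  by_cases h : i < w.length <;> simp [cat, h]

theorem isPref_cat (w : List (Fin n)) (ζ : ℕ → Fin n) : IsPref w (cat w ζ) :=
  fun _ h => (cat_apply_of_lt h ζ).symm

theorem isPref_append_singleton {w : List (Fin n)} {a : Fin n} {ζ : ℕ → Fin n} :
    IsPref (w ++ [a]) ζ ↔ IsPref w ζ ∧ ζ w.length = a := by
  simp only [IsPref, List.length_append, List.length_singleton]
  constructor
  · intro h
    refine ⟨fun i hi => ?_, ?_⟩
    · simpa [List.getElem_append_left hi] using h i (by omega)
    · simpa using (h w.length (by omega)).symm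
  · rintro ⟨hw, ha⟩ i hi
    rcases Nat.lt_or_ge i w.length with hlt | hge
    · rw [List.getElem_append_left hlt]; exact hw i hlt
    · obtain rfl : i = w.length := by omega
      simpa using ha.symm

theorem IsPref.eq_of_length_eq {w v : List (Fin n)} {ζ : ℕ → Fin n} (hw : IsPref w ζ)
    (hv : IsPref v ζ) (h : w.length = v.length) : w = v :=
  List.ext_getElem h fun i h1 h2 => (hw i h1).trans (hv i h2).symm

theorem length_le_of_forall_cat_eq (hn : 2 ≤ n) {q q' : List (Fin n)}
    {τ τ' : Equiv.Perm (Fin n)}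
    (h : ∀ u : ℕ → Fin n, cat q (fun j => τ (u j)) = cat q' (fun j => τ' (u j))) :
    q'.length ≤ q.length := by
  by_contra! hlt
  have hconst : ∀ a, τ a = q'[q.length] := fun a => by
    simpa [cat_apply_length, cat_apply_of_lt hlt] using congrFun (h fun _ => a) q.length
  have h01 := τ.injective ((hconst ⟨0, by omega⟩).trans (hconst ⟨1, by omega⟩).symm)
  simp at h01

theorem eq_of_forall_cat_eq (hn : 2 ≤ n) {q q' : List (Fin n)} {τ τ' : Equiv.Perm (Fin n)}
    (h : ∀ u : ℕ → Fin n, cat q (fun j => τ (u j)) = cat q' (fun j => τ' (u j))) :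
    q = q' ∧ τ = τ' := by
  have hlen : q.length = q'.length :=
    le_antisymm (length_le_of_forall_cat_eq hn fun u => (h u).symm)
      (length_le_of_forall_cat_eq hn h)
  refine ⟨List.ext_getElem hlen fun i h1 h2 => ?_, Equiv.ext fun a => ?_⟩
  · simpa [cat_apply_of_lt h1, cat_apply_of_lt h2] using
      congrFun (h fun _ => ⟨0, by omega⟩) i
  · have := congrFun (h fun _ => a) q.length
    rwa [cat_apply_length, hlen, cat_apply_length] at this

end Words

section Codes

variable {n : ℕ} {ι κ : Type}

theorem IsCPC.comp_equiv {P : ι → List (Fin n)} (hP : IsCPC P) (e : κ ≃ ι) :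
    IsCPC (P ∘ e) :=
  fun ζ => e.symm.existsUnique_congr_left.1 (by simpa using hP ζ)

theorem IsCPC.expand {P : ι → List (Fin n)} (hP : IsCPC P) (i : ι) (σ : Equiv.Perm (Fin n)) :
    IsCPC (Sum.elim (fun j : {j // j ≠ i} => P j) fun a : Fin n => P i ++ [σ a]) := by
  intro ζ
  obtain ⟨i', hi', huniq⟩ := hP ζ
  rcases eq_or_ne i' i with rfl | hne
  · refine ⟨Sum.inr (σ⁻¹ (ζ (P i').length)), ?_, ?_⟩
    · simpa [isPref_append_singleton] using hi'
    · rintro (j | a) hj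
      · exact absurd (huniq j hj) j.2
      · obtain ⟨-, ha⟩ := isPref_append_singleton.1 hj
        rw [ha, Equiv.Perm.inv_def, Equiv.symm_apply_apply]
  · refine ⟨Sum.inl ⟨i', hne⟩, hi', ?_⟩
    rintro (j | a) hj
    · exact congrArg _ (Subtype.ext (huniq j hj))
    · exact absurd (huniq i (isPref_append_singleton.1 hj).1).symm hne

theorem IsCPC.existsUnique_eq (hn : 0 < n) {N : ℕ} {P : ι → List (Fin n)} (hP : IsCPC P)
    (hPN : ∀ i, (P i).length = N) (w : List (Fin n)) (hw : w.length = N) : ∃! i, P i = w := by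
  obtain ⟨i, hi, huniq⟩ := hP (cat w fun _ => ⟨0, hn⟩)
  refine ⟨i, hi.eq_of_length_eq (isPref_cat _ _) (by rw [hPN, hw]), fun j hj => huniq j ?_⟩
  exact hj ▸ isPref_cat _ _

theorem IsCPC.exists_equiv_of_length_eq (hn : 0 < n) {N : ℕ} {P : ι → List (Fin n)}
    {Q : κ → List (Fin n)} (hP : IsCPC P) (hQ : IsCPC Q) (hPN : ∀ i, (P i).length = N)
    (hQN : ∀ j, (Q j).length = N) : ∃ e : ι ≃ κ, ∀ i, Q (e i) = P i := by
  choose g hg using fun i => (hQ.existsUnique_eq hn hQN (P i) (hPN i)).exists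
  refine ⟨Equiv.ofBijective g ⟨fun i i' hii' => ?_, fun j => ?_⟩, hg⟩
  · exact (hP.existsUnique_eq hn hPN (P i') (hPN i')).unique
      ((hg i).symm.trans (hii' ▸ hg i')) rfl
  · obtain ⟨i, hi⟩ := (hP.existsUnique_eq hn hPN (Q j) (hQN j)).exists
    exact ⟨i, (hQ.existsUnique_eq hn hQN (P i) (hPN i)).unique (hg i) hi.symm⟩

end Codes

section Moves

variable {n : ℕ} {H : Subgroup (Equiv.Perm (Fin n))}

def Expands (T T' : Table n H) : Prop :=
  ∃ i, ExpandAt T i T'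

def Table.IsUniform (N : ℕ) (T : Table n H) : Prop :=
  (∀ j, T.σ j = 1) ∧ ∀ j, (T.P j).length = N

def Table.IsReindex (T T' : Table n H) (e : Fin T.k ≃ Fin T'.k) : Prop :=
  ∀ j, T'.P (e j) = T.P j ∧ T'.σ (e j) = T.σ j ∧ T'.Q (e j) = T.Q j ∧ T'.τ (e j) = T.τ j

theorem exists_pushDown (T : Table n H) : ∃ T' : Table n H, PushDown T T' :=
  ⟨{ T with
      σ := fun _ => 1
      τ := fun i => T.τ i * (T.σ i)⁻¹
      σ_mem := fun _ => one_mem H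
      τ_mem := fun i => mul_mem (T.τ_mem i) (inv_mem (T.σ_mem i)) },
    rfl, fun _ => ⟨rfl, rfl, rfl, rfl⟩⟩

theorem PushDown.induces {T T' : Table n H} {f : (ℕ → Fin n) → (ℕ → Fin n)}
    (h : PushDown T T') (hT : Induces T f) : Induces T' f := by
  obtain ⟨hk, hcol⟩ := h
  intro j u
  obtain ⟨hP, hσ, hQ, hτ⟩ := hcol j
  simpa [hP, hσ, hQ, hτ, Equiv.Perm.inv_def] using
    hT (Fin.cast hk j) fun k => (T.σ (Fin.cast hk j))⁻¹ (u k)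

theorem exists_expandAt (T : Table n H) (i : Fin T.k) : ∃ T' : Table n H, ExpandAt T i T' := by
  let e := (Fintype.equivFin ({j : Fin T.k // j ≠ i} ⊕ Fin n)).symm
  refine ⟨
    { k := Fintype.card ({j : Fin T.k // j ≠ i} ⊕ Fin n)
      P := Sum.elim (fun j : {j // j ≠ i} => T.P j) (fun a => T.P i ++ [T.σ i a]) ∘ e
      Q := Sum.elim (fun j : {j // j ≠ i} => T.Q j) (fun a => T.Q i ++ [T.τ i a]) ∘ e
      σ := Sum.elim (fun j : {j // j ≠ i} => T.σ j) (fun _ => T.σ i) ∘ e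
      τ := Sum.elim (fun j : {j // j ≠ i} => T.τ j) (fun _ => T.τ i) ∘ e
      σ_mem := fun j => by
        simp only [Function.comp_apply]; cases e j <;> exact T.σ_mem _
      τ_mem := fun j => by
        simp only [Function.comp_apply]; cases e j <;> exact T.τ_mem _
      hP := (T.hP.expand i (T.σ i)).comp_equiv e
      hQ := (T.hQ.expand i (T.τ i)).comp_equiv e }, e, fun j => ⟨?_, ?_⟩⟩
  · intro j' hj
    simp [hj]
  · intro a ha
    simp [ha]

theorem ExpandAt.induces {T T' : Table n H} {i : Fin T.k} {f : (ℕ → Fin n) → (ℕ → Fin n)}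
    (h : ExpandAt T i T') (hT : Induces T f) : Induces T' f := by
  obtain ⟨e, he⟩ := h
  intro j u
  rcases hj : e j with j' | a
  · obtain ⟨hP, hσ, hQ, hτ⟩ := (he j).1 j' hj
    rw [hP, hσ, hQ, hτ]
    exact hT j' u
  · obtain ⟨hP, hσ, hQ, hτ⟩ := (he j).2 a hj
    have hsingle : ∀ g : Equiv.Perm (Fin n), (fun k => g (cat [a] u k)) =
        cat [g a] (fun k => g (u k)) := fun g => by simpa using comp_cat g [a] u
    rw [hP, hσ, hQ, hτ, cat_append, cat_append, ← hsingle, ← hsingle]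
    exact hT i (cat [a] u)

theorem ExpandAt.sum_eq {M : Type*} [AddCommMonoid M] {T T' : Table n H} {i : Fin T.k}
    (h : ExpandAt T i T') (g : List (Fin n) → M) :
    ∑ j, g (T'.P j) = ∑ j : {j // j ≠ i}, g (T.P j) + ∑ a, g (T.P i ++ [T.σ i a]) := by
  obtain ⟨e, he⟩ := h
  refine (Fintype.sum_equiv e _
    (Sum.elim (fun j : {j // j ≠ i} => g (T.P j)) fun a => g (T.P i ++ [T.σ i a]))
    fun j => ?_).trans (Fintype.sum_sum_type _)
  rcases hj : e j with j' | a
  · simp [((he j).1 j' hj).1]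
  · simp [((he j).2 a hj).1]

/-- A column of depth `ℓ ≤ N` counts `1 + n + ⋯ + n ^ (N - ℓ - 1)`, so that expanding a column
of depth `< N` lowers the weight by exactly one. -/
def Table.weight (N : ℕ) (T : Table n H) : ℕ :=
  ∑ j, ∑ d ∈ range (N - (T.P j).length), n ^ d

theorem ExpandAt.weight_add_one {N : ℕ} {T T' : Table n H} {i : Fin T.k}
    (h : ExpandAt T i T') (hi : (T.P i).length < N) : T'.weight N + 1 = T.weight N := by
  obtain ⟨m, hm⟩ : ∃ m, N - (T.P i).length = m + 1 := ⟨N - (T.P i).length - 1, by omega⟩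
  have hm' : N - ((T.P i).length + 1) = m := by omega
  rw [Table.weight, Table.weight, h.sum_eq fun w => ∑ d ∈ range (N - w.length), n ^ d,
    Fintype.sum_eq_add_sum_subtype_ne _ i]
  simp only [List.length_append, List.length_singleton, hm, hm', sum_const, card_univ,
    Fintype.card_fin, smul_eq_mul, geom_sum_succ]
  ring

theorem ExpandAt.length_le {N : ℕ} {T T' : Table n H} {i : Fin T.k} (h : ExpandAt T i T')
    (hT : ∀ j, (T.P j).length ≤ N) (hi : (T.P i).length < N) (j : Fin T'.k) :
    (T'.P j).length ≤ N := by
  obtain ⟨e, he⟩ := h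
  rcases hj : e j with j' | a
  · rw [((he j).1 j' hj).1]
    exact hT j'
  · rw [((he j).2 a hj).1, List.length_append, List.length_singleton]
    omega

theorem exists_reflTransGen_expands_length_eq {N : ℕ} (T : Table n H)
    (hT : ∀ j, (T.P j).length ≤ N) :
    ∃ T' : Table n H, ReflTransGen Expands T T' ∧
      ∀ j, (T'.P j).length = N := by
  by_cases hall : ∀ j, (T.P j).length = N
  · exact ⟨T, .refl, hall⟩
  obtain ⟨i, hi⟩ := not_forall.1 hall
  have hlt : (T.P i).length < N := (hT i).lt_of_ne hi
  obtain ⟨U, hU⟩ := exists_expandAt T i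
  have hweight := hU.weight_add_one hlt
  obtain ⟨T', hUT', hT'⟩ := exists_reflTransGen_expands_length_eq U (hU.length_le hT hlt)
  exact ⟨T', .head ⟨i, hU⟩ hUT', hT'⟩
termination_by T.weight N
decreasing_by omega

theorem induces_of_reflTransGen_expands {T T' : Table n H} {f : (ℕ → Fin n) → (ℕ → Fin n)}
    (h : ReflTransGen Expands T T') (hT : Induces T f) : Induces T' f := by
  induction h with
  | refl => exact hT
  | tail _ hexp ih => exact hexp.choose_spec.induces ih

theorem exists_reflTransGen_move_isUniform {N : ℕ} {f : (ℕ → Fin n) → (ℕ → Fin n)}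
    (T : Table n H) (hf : Induces T f) (hN : ∀ j, (T.P j).length ≤ N) :
    ∃ U : Table n H, ReflTransGen Move T U ∧ Induces U f ∧ U.IsUniform N := by
  obtain ⟨T₁, hTT₁, hT₁N⟩ := exists_reflTransGen_expands_length_eq T hN
  obtain ⟨U, hU⟩ := exists_pushDown T₁
  obtain ⟨_, hcol⟩ := id hU
  refine ⟨U, ?_, hU.induces (induces_of_reflTransGen_expands hTT₁ hf),
    fun j => (hcol j).2.1, fun j => (hcol j).1 ▸ hT₁N _⟩
  exact (ReflTransGen.mono (fun _ _ h => Or.inl h) _ _ hTT₁).tail (Or.inr (Or.inl hU))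

theorem ExpandAt.reindex {T T' U : Table n H} {i : Fin T.k} (h : ExpandAt T i U)
    {e : Fin T.k ≃ Fin T'.k} (hcol : T.IsReindex T' e) : ExpandAt T' (e i) U := by
  obtain ⟨e₀, he₀⟩ := h
  let esub : {j // j ≠ i} ≃ {j // j ≠ e i} := e.subtypeEquiv fun _ => e.injective.ne_iff.symm
  refine ⟨e₀.trans (esub.sumCongr (Equiv.refl _)),
    fun j => ⟨fun j' hj' => ?_, fun a ha => ?_⟩⟩
  · have hj : e₀ j = Sum.inl (esub.symm j') := by
      simpa using congrArg (esub.sumCongr (Equiv.refl _)).symm hj'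
    obtain ⟨hP, hσ, hQ, hτ⟩ := hcol (esub.symm j')
    have he : e (esub.symm j') = j' := by simp [esub]
    rw [he] at hP hσ hQ hτ
    rw [hP, hσ, hQ, hτ]
    exact (he₀ j).1 _ hj
  · have hj : e₀ j = Sum.inr a := by
      simpa using congrArg (esub.sumCongr (Equiv.refl _)).symm ha
    obtain ⟨hP, hσ, hQ, hτ⟩ := hcol i
    rw [hP, hσ, hQ, hτ]
    exact (he₀ j).2 a hj

theorem eqvGen_move_of_isReindex {T T' : Table n H} {e : Fin T.k ≃ Fin T'.k}
    (hcol : T.IsReindex T' e) (i : Fin T.k) : EqvGen Move T T' := by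
  obtain ⟨U, hU⟩ := exists_expandAt T i
  exact .trans _ _ _ (.rel _ _ (Or.inl ⟨i, hU⟩))
    (.symm _ _ (.rel _ _ (Or.inl ⟨e i, hU.reindex hcol⟩)))

theorem eqvGen_move_of_isUniform (hn : 2 ≤ n) {N : ℕ} {f : (ℕ → Fin n) → (ℕ → Fin n)}
    {U U' : Table n H} (hU : Induces U f) (hU' : Induces U' f) (hUN : U.IsUniform N)
    (hUN' : U'.IsUniform N) : EqvGen Move U U' := by
  obtain ⟨hσ, hN⟩ := hUN
  obtain ⟨hσ', hN'⟩ := hUN'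
  obtain ⟨e, he⟩ := U.hP.exists_equiv_of_length_eq (by omega) U'.hP hN hN'
  have hcol : U.IsReindex U' e := fun j => by
    have hcat : ∀ u : ℕ → Fin n,
        cat (U'.Q (e j)) (fun k => U'.τ (e j) (u k)) = cat (U.Q j) (fun k => U.τ j (u k)) :=
      fun u => by
        have h := hU j u
        have h' := hU' (e j) u
        simp only [hσ, hσ', he, Equiv.Perm.one_apply] at h h'
        exact h'.symm.trans h
    obtain ⟨hQ, hτ⟩ := eq_of_forall_cat_eq hn hcat
    exact ⟨he j, (hσ' _).trans (hσ j).symm, hQ, hτ⟩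
  obtain ⟨i, -⟩ := U.hP fun _ => ⟨0, by omega⟩
  exact eqvGen_move_of_isReindex hcol i

end Moves

/-- Two tables over `H` inducing the same homeomorphism of `C_n`
are related by a finite sequence of the basic moves (expansion, push-down,
push-up) and their inverses. -/
theorem stmt16 (n : ℕ) (hn : 2 ≤ n) (H : Subgroup (Equiv.Perm (Fin n)))
    (T T' : Table n H) (f : (ℕ → Fin n) ≃ₜ (ℕ → Fin n))
    (hT : Induces T ⇑f) (hT' : Induces T' ⇑f) :
    Relation.ReflTransGen (fun A B : Table n H => Move A B ∨ Move B A) T T' := by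
  obtain ⟨N, hN⟩ := Finite.exists_le fun j => (T.P j).length
  obtain ⟨N', hN'⟩ := Finite.exists_le fun j => (T'.P j).length
  obtain ⟨U, hTU, hUf, hUN⟩ :=
    exists_reflTransGen_move_isUniform T hT fun j => (hN j).trans (le_max_left N N')
  obtain ⟨U', hTU', hUf', hUN'⟩ :=
    exists_reflTransGen_move_isUniform T' hT' fun j => (hN' j).trans (le_max_right N N')
  change ReflTransGen (SymmGen Move) T T'
  rw [EqvGen.reflTransGen_symmGen]
  exact .trans _ _ _ (EqvGen.reflTransGen_le_eqvGen _ _ _ hTU) <|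
    .trans _ _ _ (eqvGen_move_of_isUniform hn hUf hUf' hUN hUN') <|
      .symm _ _ (EqvGen.reflTransGen_le_eqvGen _ _ _ hTU')

end Paper
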